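/- (Case of general position: first frame expansion, relations I₂ = 1/3 and I₁ = −4·I₆ of (3.10)) Under the stated assumptions, the covariant derivative of X along X satisfies ∇_X X = −4·I₆·X + (1/3)·Y on U, where I₆ = (A_{0.1} − B_{1.0})/(3·F²) − (A·F_{0.1} − B·F_{1.0})/(3·F³). -/

import Mathlib

noncomputable section

open Real

/-- Partial derivative in the first argument (`f_{1.0}`). -/
def pdx (f : ℝ → ℝ → ℝ) : ℝ → ℝ → ℝ := fun x y => deriv (fun t => f t y) x

/-- Partial derivative in the second argument (`f_{0.1}`). -/
def pdy (f : ℝ → ℝ → ℝ) : ℝ → ℝ → ℝ := fun x y => deriv (fun t => f x t) y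

/-- Indexed partial derivative: `0 ↦ ∂/∂x`, `1 ↦ ∂/∂y`. -/
def pd (i : Fin 2) (f : ℝ → ℝ → ℝ) : ℝ → ℝ → ℝ := if i = 0 then pdx f else pdy f

/-- Smoothness of a two-variable real function on a set `U ⊆ ℝ²`. -/
def Smooth2 (U : Set (ℝ × ℝ)) (f : ℝ → ℝ → ℝ) : Prop :=
  ContDiffOn ℝ (⊤ : ℕ∞) (Function.uncurry f) U

/-- The quantity `A` of formula (1.6). -/
def coefA (P Q R S : ℝ → ℝ → ℝ) : ℝ → ℝ → ℝ := fun x y =>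
  pdy (pdy P) x y - 2 * pdx (pdy Q) x y + pdx (pdx R) x y
    + 2 * P x y * pdx S x y + S x y * pdx P x y
    - 3 * P x y * pdy R x y - 3 * R x y * pdy P x y
    - 3 * Q x y * pdx R x y + 6 * Q x y * pdy Q x y

/-- The quantity `B` of formula (1.6). -/
def coefB (P Q R S : ℝ → ℝ → ℝ) : ℝ → ℝ → ℝ := fun x y =>
  pdx (pdx S) x y - 2 * pdx (pdy R) x y + pdy (pdy Q) x y
    - 2 * S x y * pdy P x y - P x y * pdy S x y
    + 3 * S x y * pdx Q x y + 3 * Q x y * pdx S x y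
    + 3 * R x y * pdy Q x y - 6 * R x y * pdx R x y

/-- The quantity `G` of formula (2.4). -/
def coefG (P Q R S : ℝ → ℝ → ℝ) : ℝ → ℝ → ℝ := fun x y =>
  -(coefB P Q R S x y) * pdx (coefB P Q R S) x y
    - 3 * coefA P Q R S x y * pdy (coefB P Q R S) x y
    + 4 * coefB P Q R S x y * pdy (coefA P Q R S) x y
    + 3 * S x y * (coefA P Q R S x y)^2
    - 6 * R x y * coefA P Q R S x y * coefB P Q R S x y
    + 3 * Q x y * (coefB P Q R S x y)^2

/-- The quantity `H` of formula (2.4). -/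
def coefH (P Q R S : ℝ → ℝ → ℝ) : ℝ → ℝ → ℝ := fun x y =>
  -(coefA P Q R S x y) * pdy (coefA P Q R S) x y
    - 3 * coefB P Q R S x y * pdx (coefA P Q R S) x y
    + 4 * coefA P Q R S x y * pdx (coefB P Q R S) x y
    - 3 * P x y * (coefB P Q R S x y)^2
    + 6 * Q x y * coefA P Q R S x y * coefB P Q R S x y
    - 3 * R x y * (coefA P Q R S x y)^2

/-- The quantity `F⁵` of formula (2.2). -/
def coefF5 (P Q R S : ℝ → ℝ → ℝ) : ℝ → ℝ → ℝ := fun x y =>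
  coefA P Q R S x y * coefB P Q R S x y * pdy (coefA P Q R S) x y
    + coefA P Q R S x y * coefB P Q R S x y * pdx (coefB P Q R S) x y
    - (coefA P Q R S x y)^2 * pdy (coefB P Q R S) x y
    - (coefB P Q R S x y)^2 * pdx (coefA P Q R S) x y
    - P x y * (coefB P Q R S x y)^3
    + 3 * Q x y * coefA P Q R S x y * (coefB P Q R S x y)^2
    - 3 * R x y * (coefA P Q R S x y)^2 * coefB P Q R S x y
    + S x y * (coefA P Q R S x y)^3

/-- The fully covariant symbol `θ_{ijk}` of (2.7) built from the ODE coefficients. -/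
def thetaLow (P Q R S : ℝ → ℝ → ℝ) (i j k : Fin 2) : ℝ → ℝ → ℝ :=
  match i.1 + j.1 + k.1 with
  | 0 => P
  | 1 => Q
  | 2 => R
  | _ => S

/-- The symbol `θ^k_{ij}` of (2.8), obtained by raising the first index with `d^{kr}`. -/
def thetaUp (P Q R S : ℝ → ℝ → ℝ) (k i j : Fin 2) : ℝ → ℝ → ℝ :=
  if k = 0 then thetaLow P Q R S 1 i j
  else fun x y => -(thetaLow P Q R S 0 i j x y)

/-- The affine connection `Γ^k_{ij} = θ^k_{ij} − (φ_i δ^k_j + φ_j δ^k_i)/3` of (3.3)/(4.22). -/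
def gamConn (P Q R S phi1 phi2 : ℝ → ℝ → ℝ) (k i j : Fin 2) : ℝ → ℝ → ℝ := fun x y =>
  thetaUp P Q R S k i j x y -
    ((if i = 0 then phi1 x y else phi2 x y) * (if k = j then (1:ℝ) else 0)
      + (if j = 0 then phi1 x y else phi2 x y) * (if k = i then (1:ℝ) else 0)) / 3

/-- Covariant derivative `(∇_V W)^k = Σ_i V^i (∂W^k/∂x^i + Σ_s Γ^k_{is} W^s)`. -/
def covD (Gam : Fin 2 → Fin 2 → Fin 2 → ℝ → ℝ → ℝ) (V W : Fin 2 → ℝ → ℝ → ℝ)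
    (k : Fin 2) : ℝ → ℝ → ℝ := fun x y =>
  ∑ i : Fin 2, V i x y * (pd i (W k) x y + ∑ s : Fin 2, Gam k i s x y * W s x y)

/-- The fifth root `F = (F⁵)^{1/5}` (real power), for the case of general position `F⁵ > 0`. -/
def frF (P Q R S : ℝ → ℝ → ℝ) : ℝ → ℝ → ℝ := fun x y =>
  (coefF5 P Q R S x y) ^ ((1:ℝ)/5)

/-- `φ₁ = −F_{1.0}/F`. -/
def phiGP1 (P Q R S : ℝ → ℝ → ℝ) : ℝ → ℝ → ℝ := fun x y =>
  -(pdx (frF P Q R S) x y / frF P Q R S x y)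

/-- `φ₂ = −F_{0.1}/F`. -/
def phiGP2 (P Q R S : ℝ → ℝ → ℝ) : ℝ → ℝ → ℝ := fun x y =>
  -(pdy (frF P Q R S) x y / frF P Q R S x y)

/-- The vector field `X = F⁻²·(B, −A)` of (3.4). -/
def frameX (P Q R S : ℝ → ℝ → ℝ) (k : Fin 2) : ℝ → ℝ → ℝ := fun x y =>
  (if k = 0 then coefB P Q R S x y else -(coefA P Q R S x y)) / (frF P Q R S x y)^2

/-- The vector field `Y = F⁻⁴·(G, H)` of (3.4). -/
def frameY (P Q R S : ℝ → ℝ → ℝ) (k : Fin 2) : ℝ → ℝ → ℝ := fun x y =>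
  (if k = 0 then coefG P Q R S x y else coefH P Q R S x y) / (frF P Q R S x y)^4

/-- The invariant `I₆` in the simplified form (3.11). -/
def inv6 (P Q R S : ℝ → ℝ → ℝ) : ℝ → ℝ → ℝ := fun x y =>
  (pdy (coefA P Q R S) x y - pdx (coefB P Q R S) x y) / (3 * (frF P Q R S x y)^2)
    - (coefA P Q R S x y * pdy (frF P Q R S) x y
        - coefB P Q R S x y * pdx (frF P Q R S) x y) / (3 * (frF P Q R S x y)^3)

/-!
Write `X = F⁻² w` with `w = (B, -A)`. In `∇_X X`, differentiating the weight `F⁻²` produces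
`-2 F⁻⁵ (w·dF) w`, and the projective part `φ = -d log F` of the connection produces
`(2/3) F⁻⁵ (w·dF) w`; their sum `-(4/3) F⁻⁵ (w·dF) w` is exactly the part of `-4 I₆ X` involving
derivatives of `F`. What remains, `F⁻⁴ (w^i ∂_i w + θ(w, w))`, involves no `F` at all, and equals
`F⁻⁴ (-(4/3)(A_{0.1} - B_{1.0}) w + (G, H)/3)` by a polynomial identity in `A`, `B`, their first
derivatives and `P, Q, R, S`.
-/

open Function

section PartialDerivatives

variable {f g F : ℝ → ℝ → ℝ} {x y : ℝ}

@[simp] lemma pd_zero (f : ℝ → ℝ → ℝ) : pd 0 f = pdx f := rfl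

@[simp] lemma pd_one (f : ℝ → ℝ → ℝ) : pd 1 f = pdy f := rfl

lemma pdx_neg (f : ℝ → ℝ → ℝ) : pdx (-f) = -pdx f := by
  funext x y
  exact deriv.neg

lemma pdy_neg (f : ℝ → ℝ → ℝ) : pdy (-f) = -pdy f := by
  funext x y
  exact deriv.neg

lemma pdx_eq_fderiv (hf : DifferentiableAt ℝ (uncurry f) (x, y)) :
    pdx f x y = fderiv ℝ (uncurry f) (x, y) (1, 0) :=
  (hf.hasFDerivAt.comp_hasDerivAt (l := uncurry f) x
    ((hasDerivAt_id x).prodMk (hasDerivAt_const x y))).deriv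

lemma pdy_eq_fderiv (hf : DifferentiableAt ℝ (uncurry f) (x, y)) :
    pdy f x y = fderiv ℝ (uncurry f) (x, y) (0, 1) :=
  (hf.hasFDerivAt.comp_hasDerivAt (l := uncurry f) y
    ((hasDerivAt_const y x).prodMk (hasDerivAt_id y))).deriv

lemma hasDerivAt_pdx (hf : DifferentiableAt ℝ (uncurry f) (x, y)) :
    HasDerivAt (fun t => f t y) (pdx f x y) x :=
  (hf.hasFDerivAt.comp_hasDerivAt (l := uncurry f) x
    ((hasDerivAt_id x).prodMk (hasDerivAt_const x y))).differentiableAt.hasDerivAt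

lemma hasDerivAt_pdy (hf : DifferentiableAt ℝ (uncurry f) (x, y)) :
    HasDerivAt (fun t => f x t) (pdy f x y) y :=
  (hf.hasFDerivAt.comp_hasDerivAt (l := uncurry f) y
    ((hasDerivAt_const y x).prodMk (hasDerivAt_id y))).differentiableAt.hasDerivAt

lemma deriv_div_sq {u v : ℝ → ℝ} {u' v' t : ℝ} (hu : HasDerivAt u u' t)
    (hv : HasDerivAt v v' t) (hv0 : v t ≠ 0) :
    deriv (fun s => u s / v s ^ 2) t = u' / v t ^ 2 - 2 * u t * v' / v t ^ 3 := by
  rw [(hu.fun_div (hv.fun_pow 2) (pow_ne_zero 2 hv0)).deriv]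
  field_simp
  ring

lemma pdx_div_sq (hg : DifferentiableAt ℝ (uncurry g) (x, y))
    (hF : DifferentiableAt ℝ (uncurry F) (x, y)) (hF0 : F x y ≠ 0) :
    pdx (fun x y => g x y / F x y ^ 2) x y
      = pdx g x y / F x y ^ 2 - 2 * g x y * pdx F x y / F x y ^ 3 :=
  deriv_div_sq (hasDerivAt_pdx hg) (hasDerivAt_pdx hF) hF0

lemma pdy_div_sq (hg : DifferentiableAt ℝ (uncurry g) (x, y))
    (hF : DifferentiableAt ℝ (uncurry F) (x, y)) (hF0 : F x y ≠ 0) :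
    pdy (fun x y => g x y / F x y ^ 2) x y
      = pdy g x y / F x y ^ 2 - 2 * g x y * pdy F x y / F x y ^ 3 :=
  deriv_div_sq (hasDerivAt_pdy hg) (hasDerivAt_pdy hF) hF0

end PartialDerivatives

namespace Smooth2

variable {U : Set (ℝ × ℝ)} {f : ℝ → ℝ → ℝ}

lemma differentiableAt (hf : Smooth2 U f) (hU : IsOpen U) {x y : ℝ} (h : (x, y) ∈ U) :
    DifferentiableAt ℝ (uncurry f) (x, y) :=
  (hf.differentiableOn (by simp)).differentiableAt (hU.mem_nhds h)

lemma pdx (hf : Smooth2 U f) (hU : IsOpen U) : Smooth2 U (pdx f) :=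
  ((hf.fderiv_of_isOpen hU (mod_cast le_top)).clm_apply contDiffOn_const).congr
    fun ⟨_, _⟩ h => pdx_eq_fderiv (hf.differentiableAt hU h)

lemma pdy (hf : Smooth2 U f) (hU : IsOpen U) : Smooth2 U (pdy f) :=
  ((hf.fderiv_of_isOpen hU (mod_cast le_top)).clm_apply contDiffOn_const).congr
    fun ⟨_, _⟩ h => pdy_eq_fderiv (hf.differentiableAt hU h)

end Smooth2

section Coefficients

variable {U : Set (ℝ × ℝ)} {P Q R S : ℝ → ℝ → ℝ}

lemma smooth2_coefA (hU : IsOpen U) (hP : Smooth2 U P) (hQ : Smooth2 U Q)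
    (hR : Smooth2 U R) (hS : Smooth2 U S) : Smooth2 U (coefA P Q R S) := by
  have := (hP.pdy hU).pdy hU
  have := (hQ.pdy hU).pdx hU
  have := (hR.pdx hU).pdx hU
  have := hS.pdx hU
  have := hP.pdx hU
  have := hR.pdy hU
  have := hP.pdy hU
  have := hR.pdx hU
  have := hQ.pdy hU
  unfold Smooth2 uncurry at *
  unfold coefA
  fun_prop

lemma smooth2_coefB (hU : IsOpen U) (hP : Smooth2 U P) (hQ : Smooth2 U Q)
    (hR : Smooth2 U R) (hS : Smooth2 U S) : Smooth2 U (coefB P Q R S) := by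
  have := (hS.pdx hU).pdx hU
  have := (hR.pdy hU).pdx hU
  have := (hQ.pdy hU).pdy hU
  have := hP.pdy hU
  have := hS.pdy hU
  have := hQ.pdx hU
  have := hS.pdx hU
  have := hQ.pdy hU
  have := hR.pdx hU
  unfold Smooth2 uncurry at *
  unfold coefB
  fun_prop

lemma smooth2_coefF5 (hU : IsOpen U) (hP : Smooth2 U P) (hQ : Smooth2 U Q)
    (hR : Smooth2 U R) (hS : Smooth2 U S) : Smooth2 U (coefF5 P Q R S) := by
  have hA := smooth2_coefA hU hP hQ hR hS
  have hB := smooth2_coefB hU hP hQ hR hS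
  have := hA.pdy hU
  have := hA.pdx hU
  have := hB.pdy hU
  have := hB.pdx hU
  unfold Smooth2 uncurry at *
  unfold coefF5
  fun_prop

end Coefficients

lemma covD_gamConn (P Q R S φ₁ φ₂ : ℝ → ℝ → ℝ) (V W : Fin 2 → ℝ → ℝ → ℝ) (k : Fin 2)
    (x y : ℝ) :
    covD (gamConn P Q R S φ₁ φ₂) V W k x y
      = ∑ i, V i x y * (pd i (W k) x y + ∑ s, thetaUp P Q R S k i s x y * W s x y)
        - ((φ₁ x y * V 0 x y + φ₂ x y * V 1 x y) * W k x y
          + (φ₁ x y * W 0 x y + φ₂ x y * W 1 x y) * V k x y) / 3 := by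
  fin_cases k <;>
  · simp only [covD, gamConn, Fin.sum_univ_two, Fin.zero_eta, Fin.mk_one, Fin.isValue,
      ↓reduceIte, zero_ne_one, one_ne_zero]
    ring

lemma covD_gamConn_div_sq {P Q R S φ₁ φ₂ F : ℝ → ℝ → ℝ} {w : Fin 2 → ℝ → ℝ → ℝ} {x y : ℝ}
    (hw : ∀ k, DifferentiableAt ℝ (uncurry (w k)) (x, y))
    (hF : DifferentiableAt ℝ (uncurry F) (x, y)) (hF0 : F x y ≠ 0)
    (hφ₁ : φ₁ x y = -(pdx F x y / F x y)) (hφ₂ : φ₂ x y = -(pdy F x y / F x y)) (k : Fin 2) :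
    covD (gamConn P Q R S φ₁ φ₂) (fun k x y => w k x y / F x y ^ 2)
        (fun k x y => w k x y / F x y ^ 2) k x y
      = (∑ i, w i x y * pd i (w k) x y
          + ∑ i, ∑ s, thetaUp P Q R S k i s x y * w i x y * w s x y) / F x y ^ 4
        - 4 / 3 * (∑ i, w i x y * pd i F x y) * w k x y / F x y ^ 5 := by
  rw [covD_gamConn]
  simp only [Fin.sum_univ_two, pd_zero, pd_one, pdx_div_sq (hw k) hF hF0,
    pdy_div_sq (hw k) hF hF0, hφ₁, hφ₂]
  field_simp
  ring

def frameXNum (P Q R S : ℝ → ℝ → ℝ) (k : Fin 2) : ℝ → ℝ → ℝ :=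
  if k = 0 then coefB P Q R S else -coefA P Q R S

def frameYNum (P Q R S : ℝ → ℝ → ℝ) (k : Fin 2) : ℝ → ℝ → ℝ :=
  if k = 0 then coefG P Q R S else coefH P Q R S

section Frame

variable (P Q R S : ℝ → ℝ → ℝ)

@[simp] lemma frameXNum_zero : frameXNum P Q R S 0 = coefB P Q R S := rfl

@[simp] lemma frameXNum_one : frameXNum P Q R S 1 = -coefA P Q R S := rfl

lemma frameX_eq_div :
    frameX P Q R S = fun k x y => frameXNum P Q R S k x y / frF P Q R S x y ^ 2 := by
  funext k x y
  fin_cases k <;> rfl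

lemma frameY_eq_div (k : Fin 2) (x y : ℝ) :
    frameY P Q R S k x y = frameYNum P Q R S k x y / frF P Q R S x y ^ 4 := by
  fin_cases k <;> rfl

lemma frameXNum_connection_identity (k : Fin 2) (x y : ℝ) :
    ∑ i, frameXNum P Q R S i x y * pd i (frameXNum P Q R S k) x y
        + ∑ i, ∑ s, thetaUp P Q R S k i s x y * frameXNum P Q R S i x y * frameXNum P Q R S s x y
      = -4 / 3 * (pdy (coefA P Q R S) x y - pdx (coefB P Q R S) x y) * frameXNum P Q R S k x y
        + 1 / 3 * frameYNum P Q R S k x y := by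
  fin_cases k <;>
  · simp only [Fin.sum_univ_two, Fin.zero_eta, Fin.mk_one, Fin.isValue, frameXNum_zero,
      frameXNum_one, frameYNum, pd_zero, pd_one, pdx_neg, pdy_neg, Pi.neg_apply, thetaUp, thetaLow,
      ↓reduceIte, one_ne_zero, Fin.val_zero, Fin.val_one, coefG, coefH]
    ring

end Frame

theorem frame_expansion_XX_general
    (U : Set (ℝ × ℝ)) (hU : IsOpen U)
    (P Q R S : ℝ → ℝ → ℝ)
    (hP : Smooth2 U P) (hQ : Smooth2 U Q) (hR : Smooth2 U R) (hS : Smooth2 U S)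
    (hpos : ∀ x y : ℝ, (x, y) ∈ U → 0 < coefF5 P Q R S x y) :
    ∀ k : Fin 2, ∀ x y : ℝ, (x, y) ∈ U →
      covD (gamConn P Q R S (phiGP1 P Q R S) (phiGP2 P Q R S))
          (frameX P Q R S) (frameX P Q R S) k x y
        = -4 * inv6 P Q R S x y * frameX P Q R S k x y
          + (1/3) * frameY P Q R S k x y := by
  intro k x y hxy
  have hA := (smooth2_coefA hU hP hQ hR hS).differentiableAt hU hxy
  have hB := (smooth2_coefB hU hP hQ hR hS).differentiableAt hU hxy
  have hF5 := (smooth2_coefF5 hU hP hQ hR hS).differentiableAt hU hxy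
  have hF_pos : 0 < frF P Q R S x y := rpow_pos_of_pos (hpos x y hxy) _
  have hF : DifferentiableAt ℝ (uncurry (frF P Q R S)) (x, y) :=
    hF5.rpow_const (Or.inl (hpos x y hxy).ne')
  have hw : ∀ k, DifferentiableAt ℝ (uncurry (frameXNum P Q R S k)) (x, y) := by
    intro k
    fin_cases k
    exacts [hB, hA.neg]
  rw [frameX_eq_div, covD_gamConn_div_sq hw hF hF_pos.ne' rfl rfl,
    frameXNum_connection_identity, frameY_eq_div]
  simp only [Fin.sum_univ_two, pd_zero, pd_one, frameXNum_zero, frameXNum_one, Pi.neg_apply, inv6]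
  field_simp
  ring

/-- First frame expansion of (3.5): `∇_X X = −4·I₆·X + (1/3)·Y` (relations
`I₁ = −4·I₆` and `I₂ = 1/3` of (3.10)). -/
theorem frame_expansion_XX
    (U : Set (ℝ × ℝ)) (hU : IsOpen U) (hUconn : IsConnected U)
    (P Q R S : ℝ → ℝ → ℝ)
    (hP : Smooth2 U P) (hQ : Smooth2 U Q) (hR : Smooth2 U R) (hS : Smooth2 U S)
    (hpos : ∀ x y : ℝ, (x, y) ∈ U → 0 < coefF5 P Q R S x y) :
    ∀ k : Fin 2, ∀ x y : ℝ, (x, y) ∈ U →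
      covD (gamConn P Q R S (phiGP1 P Q R S) (phiGP2 P Q R S))
          (frameX P Q R S) (frameX P Q R S) k x y
        = -4 * inv6 P Q R S x y * frameX P Q R S k x y
          + (1/3) * frameY P Q R S k x y :=
  frame_expansion_XX_general U hU P Q R S hP hQ hR hS hpos
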